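/- arXiv:0909.0301 — 7 statements merged into one kernel-verified Lean document; each statement's English description precedes it below -/
import Mathlib

section
/- A diagonal in the k×k×k grid, i.e., a set of k piece selections in Fin 3 → Fin k that are pairwise disjoint (any two differ in all three coordinates), meets every axis plane exactly once, and every piece selection in the grid is disjoint from at least one member of the diagonal, provided k ≥ 4. -/
/-- A diagonal (a set of `k` pairwise disjoint selections in the `k × k × k` grid)
meets every axis plane exactly once, and for `k ≥ 4` every piece selection is
disjoint from at least one member of the diagonal. -/
theorem diagonal_meets_planes_once_and_dominates (k : ℕ) (hk : 4 ≤ k)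
    (D : Finset (Fin 3 → Fin k)) (hcard : D.card = k)
    (hdisj : ∀ s ∈ D, ∀ t ∈ D, s ≠ t → ∀ i, s i ≠ t i) :
    (∀ (i : Fin 3) (j : Fin k), (D.filter (fun s => s i = j)).card = 1) ∧
    (∀ s : Fin 3 → Fin k, ∃ d ∈ D, ∀ i, s i ≠ d i) := by
  have hinj : ∀ i : Fin 3, Set.InjOn (fun d => d i) (D : Set (Fin 3 → Fin k)) := by
    intro i a ha b hb hab
    by_contra hne
    exact hdisj a ha b hb hne i hab
  have himg : ∀ i : Fin 3, D.image (fun d => d i) = Finset.univ := by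
    intro i
    apply Finset.eq_univ_of_card
    rw [Finset.card_image_of_injOn (hinj i), hcard, Fintype.card_fin]
  have hfilter : ∀ (i : Fin 3) (j : Fin k), (D.filter (fun s => s i = j)).card = 1 := by
    intro i j
    have hj : j ∈ D.image (fun d => d i) := by rw [himg i]; exact Finset.mem_univ j
    obtain ⟨a, ha, haj⟩ := Finset.mem_image.mp hj
    rw [Finset.card_eq_one]
    refine ⟨a, ?_⟩
    ext b
    simp only [Finset.mem_filter, Finset.mem_singleton]
    constructor
    · rintro ⟨hb, hbj⟩
      exact hinj i hb ha (by simp [hbj, haj])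
    · rintro rfl; exact ⟨ha, haj⟩
  refine ⟨hfilter, ?_⟩
  intro s
  by_contra h
  push_neg at h
  have hsub : D ⊆ Finset.univ.biUnion (fun i : Fin 3 => D.filter (fun d => d i = s i)) := by
    intro d hd
    obtain ⟨i, hi⟩ := h d hd
    exact Finset.mem_biUnion.mpr ⟨i, Finset.mem_univ i, Finset.mem_filter.mpr ⟨hd, hi.symm⟩⟩
  have hle : D.card ≤ 3 := by
    calc D.card ≤ (Finset.univ.biUnion (fun i : Fin 3 => D.filter (fun d => d i = s i))).card :=
          Finset.card_le_card hsub
      _ ≤ ∑ i : Fin 3, (D.filter (fun d => d i = s i)).card := Finset.card_biUnion_le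
      _ = 3 := by simp [hfilter]
  omega
end

section
/- Let S be a multiset of 10 piece selections in Fin 3 → Fin 4 such that in each of the three coordinate directions, the four axis planes contain 3, 3, 2, 2 of the selections respectively. Then some selection in S lies on at least two axis planes containing exactly 2 selections, and hence is disjoint from at least 5 other selections of S. -/
private lemma sum_map_indicator {α : Type*} (S : Multiset α) (p : α → Prop) [DecidablePred p] :
    (S.map (fun v => if p v then (1:ℕ) else 0)).sum = Multiset.card (S.filter p) := by
  induction S using Multiset.induction with
  | empty => simp
  | cons a s ih =>
    by_cases h : p a <;> simp [Multiset.filter_cons, h, ih, add_comm]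

private lemma map_sum_comm {α ι : Type*} [Fintype ι] (S : Multiset α) (g : ι → α → ℕ) :
    (S.map (fun v => ∑ j, g j v)).sum = ∑ j, (S.map (g j)).sum := by
  induction S using Multiset.induction with
  | empty => simp
  | cons a s ih => simp [ih, Finset.sum_add_distrib]

private lemma card_filter_exists_le {α ι : Type*} [Fintype ι] (E : Multiset α)
    (q : ι → α → Prop) [∀ i, DecidablePred (q i)] [DecidablePred fun s => ∃ i, q i s] :
    Multiset.card (E.filter (fun s => ∃ i, q i s)) ≤ ∑ i, Multiset.card (E.filter (q i)) := by
  induction E using Multiset.induction with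
  | empty => simp
  | cons a E ih =>
    have hterm : ∀ i, Multiset.card ((a ::ₘ E).filter (q i))
        = (if q i a then 1 else 0) + Multiset.card (E.filter (q i)) := by
      intro i; rw [Multiset.filter_cons]; split <;> simp [add_comm]
    rw [Multiset.filter_cons]
    simp only [hterm, Finset.sum_add_distrib]
    split
    · next h =>
      obtain ⟨i₀, hi₀⟩ := h
      have h1 : (1:ℕ) ≤ ∑ i, if q i a then 1 else 0 := by
        have := Finset.single_le_sum (f := fun i => if q i a then (1:ℕ) else 0)
          (fun i _ => Nat.zero_le _) (Finset.mem_univ i₀)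
        simpa [hi₀] using this
      simp only [Multiset.card_add, Multiset.card_singleton]
      linarith [ih]
    · simp only [Multiset.card_add, Multiset.card_zero]
      linarith [ih, Nat.zero_le (∑ i, if q i a then (1:ℕ) else 0)]

/-- Case (3,3,2,2),(3,3,2,2),(3,3,2,2): among 10 selections with these plane counts
in every direction, some selection lies on at least two 2-element planes and is
therefore disjoint from at least 5 other selections. -/
theorem case_332233223322 (S : Multiset (Fin 3 → Fin 4)) (hS : Multiset.card S = 10)
    (hcounts : ∀ i : Fin 3,
      (Finset.univ.val.map (fun j : Fin 4 => Multiset.card (S.filter (fun s => s i = j))))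
        = ({3, 3, 2, 2} : Multiset ℕ)) :
    ∃ v ∈ S,
      2 ≤ (Finset.univ.filter
            (fun i : Fin 3 => Multiset.card (S.filter (fun s => s i = v i)) = 2)).card ∧
      5 ≤ Multiset.card ((S.erase v).filter (fun s => ∀ i, s i ≠ v i)) := by
  have hc3 : ∀ (i : Fin 3) (j : Fin 4), Multiset.card (S.filter (fun s => s i = j)) ≤ 3 := by
    intro i j
    have hm : Multiset.card (S.filter (fun s => s i = j)) ∈ ({3,3,2,2} : Multiset ℕ) := by
      rw [← hcounts i]
      exact Multiset.mem_map_of_mem _ (Finset.mem_univ_val _)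
    simp only [Multiset.insert_eq_cons, Multiset.mem_cons, Multiset.mem_singleton] at hm
    rcases hm with h | h | h | h <;> rw [h] <;> norm_num
  -- key: for each direction i, the sum over S of indicator(plane of v has size 2) is 4
  have key : ∀ i : Fin 3,
      (S.map (fun v => if Multiset.card (S.filter (fun s => s i = v i)) = 2 then (1:ℕ) else 0)).sum
        = 4 := by
    intro i
    have h1 : (fun v : Fin 3 → Fin 4 =>
          if Multiset.card (S.filter (fun s => s i = v i)) = 2 then (1:ℕ) else 0)
        = fun v => ∑ j : Fin 4, if v i = j then
            (if Multiset.card (S.filter (fun s => s i = j)) = 2 then 1 else 0) else 0 := by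
      funext v
      rw [Finset.sum_ite_eq]
      simp
    rw [h1, map_sum_comm]
    have h2 : ∀ j : Fin 4,
        (S.map (fun v => if v i = j then
            (if Multiset.card (S.filter (fun s => s i = j)) = 2 then (1:ℕ) else 0) else 0)).sum
        = if Multiset.card (S.filter (fun s => s i = j)) = 2
            then Multiset.card (S.filter (fun s => s i = j)) else 0 := by
      intro j
      by_cases h : Multiset.card (S.filter (fun s => s i = j)) = 2
      · simp only [if_pos h]
        exact sum_map_indicator S (fun v => v i = j)
      · simp [h]
    rw [Finset.sum_congr rfl (fun j _ => h2 j)]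
    calc (∑ j : Fin 4, if Multiset.card (S.filter (fun s => s i = j)) = 2
            then Multiset.card (S.filter (fun s => s i = j)) else 0)
        = ((Finset.univ.val.map (fun j : Fin 4 => Multiset.card (S.filter (fun s => s i = j)))).map
            (fun n => if n = 2 then n else 0)).sum := by
          rw [Multiset.map_map]; rfl
      _ = 4 := by rw [hcounts i]; decide
  -- total sum is 12
  have htot : (S.map (fun v => (Finset.univ.filter
      (fun i : Fin 3 => Multiset.card (S.filter (fun s => s i = v i)) = 2)).card)).sum = 12 := by
    have h1 : (fun v : Fin 3 → Fin 4 => (Finset.univ.filter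
          (fun i : Fin 3 => Multiset.card (S.filter (fun s => s i = v i)) = 2)).card)
        = fun v => ∑ i : Fin 3,
            if Multiset.card (S.filter (fun s => s i = v i)) = 2 then 1 else 0 := by
      funext v
      rw [Finset.card_filter]
    rw [h1, map_sum_comm, Fin.sum_univ_three, key 0, key 1, key 2]
  -- extract v lying on at least two size-2 planes
  obtain ⟨v, hvS, hv2⟩ : ∃ v ∈ S, 2 ≤ (Finset.univ.filter
      (fun i : Fin 3 => Multiset.card (S.filter (fun s => s i = v i)) = 2)).card := by
    by_contra h
    push_neg at h
    have hle : (S.map (fun v => (Finset.univ.filter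
        (fun i : Fin 3 => Multiset.card (S.filter (fun s => s i = v i)) = 2)).card)).sum
        ≤ Multiset.card S • 1 := by
      refine le_trans (Multiset.sum_le_card_nsmul _ 1 ?_) ?_
      · intro x hx
        obtain ⟨w, hw, rfl⟩ := Multiset.mem_map.mp hx
        exact Nat.lt_succ_iff.mp (h w hw)
      · rw [Multiset.card_map]
    rw [htot, hS] at hle
    simp at hle
  refine ⟨v, hvS, hv2, ?_⟩
  have hE9 : Multiset.card (S.erase v) = 9 := by
    rw [Multiset.card_erase_of_mem hvS, hS]
    rfl
  have hEc : ∀ i : Fin 3, Multiset.card ((S.erase v).filter (fun s => s i = v i)) + 1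
      = Multiset.card (S.filter (fun s => s i = v i)) := by
    intro i
    conv_rhs => rw [← Multiset.cons_erase hvS]
    have hfc := Multiset.filter_cons_of_pos (p := fun s : Fin 3 → Fin 4 => s i = v i)
      (S.erase v) (show v i = v i from rfl)
    rw [hfc, Multiset.card_cons]
  -- sum of plane sizes through v is ≤ 7
  have hsum : ∑ i : Fin 3, Multiset.card (S.filter (fun s => s i = v i)) ≤ 7 := by
    have hsplit := Finset.sum_filter_add_sum_filter_not Finset.univ
      (fun i : Fin 3 => Multiset.card (S.filter (fun s => s i = v i)) = 2)
      (fun i => Multiset.card (S.filter (fun s => s i = v i)))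
    have hA2 : ∑ i ∈ Finset.univ.filter
          (fun i : Fin 3 => Multiset.card (S.filter (fun s => s i = v i)) = 2),
          Multiset.card (S.filter (fun s => s i = v i))
        = 2 * (Finset.univ.filter
          (fun i : Fin 3 => Multiset.card (S.filter (fun s => s i = v i)) = 2)).card := by
      rw [Finset.sum_congr rfl (fun i hi => (Finset.mem_filter.mp hi).2),
        Finset.sum_const, smul_eq_mul, mul_comm]
    have hB : ∑ i ∈ Finset.univ.filter
          (fun i : Fin 3 => ¬ Multiset.card (S.filter (fun s => s i = v i)) = 2),
          Multiset.card (S.filter (fun s => s i = v i))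
        ≤ (Finset.univ.filter
          (fun i : Fin 3 => ¬ Multiset.card (S.filter (fun s => s i = v i)) = 2)).card * 3 := by
      simpa [smul_eq_mul] using Finset.sum_le_card_nsmul (Finset.univ.filter
          (fun i : Fin 3 => ¬ Multiset.card (S.filter (fun s => s i = v i)) = 2))
          (fun i => Multiset.card (S.filter (fun s => s i = v i))) 3 (fun i _ => hc3 i (v i))
    have hcards : (Finset.univ.filter
          (fun i : Fin 3 => Multiset.card (S.filter (fun s => s i = v i)) = 2)).card
        + (Finset.univ.filter
          (fun i : Fin 3 => ¬ Multiset.card (S.filter (fun s => s i = v i)) = 2)).card = 3 := by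
      have := Finset.card_filter_add_card_filter_not
        (s := (Finset.univ : Finset (Fin 3)))
        (p := fun i : Fin 3 => Multiset.card (S.filter (fun s => s i = v i)) = 2)
      simpa using this
    linarith [hsplit, hA2, hB, hcards, hv2]
  have h4 : ∑ i : Fin 3, Multiset.card ((S.erase v).filter (fun s => s i = v i)) ≤ 4 := by
    have a0 := hEc 0
    have a1 := hEc 1
    have a2 := hEc 2
    rw [Fin.sum_univ_three] at hsum ⊢
    linarith
  have hexle := card_filter_exists_le (S.erase v) (fun (i : Fin 3) (s : Fin 3 → Fin 4) => s i = v i)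
  have hnot : Multiset.card ((S.erase v).filter (fun s => ¬ ∀ i, s i ≠ v i)) ≤ 4 := by
    have heq : (S.erase v).filter (fun s => ¬ ∀ i, s i ≠ v i)
        = (S.erase v).filter (fun s => ∃ i, s i = v i) := by
      apply Multiset.filter_congr
      intro s _
      push_neg
      rfl
    rw [heq]
    exact le_trans hexle h4
  have hpart := congrArg Multiset.card
    (Multiset.filter_add_not (fun s => ∀ i, s i ≠ v i) (S.erase v))
  rw [Multiset.card_add, hE9] at hpart
  linarith
end

section
/- Let S be a set of 10 piece selections in Fin 3 → Fin 4 with positive weights summing so that each of the 12 axis planes has total weight exactly 1/4. Suppose that in every coordinate direction the plane counts are (4,2,2,2). Then some selection of S lies on no 4-element plane, and consequently is disjoint from at least 6 other selections of S. -/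
lemma key4_aux (c : Fin 4 → ℕ)
    (h : Finset.univ.val.map c = ({4, 2, 2, 2} : Multiset ℕ)) :
    ∃ j, c j = 4 ∧ ∀ j', j' ≠ j → c j' = 2 := by
  have hmem : ∀ j, c j = 4 ∨ c j = 2 := by
    intro j
    have : c j ∈ Finset.univ.val.map c := Multiset.mem_map_of_mem c (by simp)
    rw [h] at this
    simpa using this
  have hsum : c 0 + c 1 + c 2 + c 3 = 10 := by
    have := congrArg Multiset.sum h
    have hl : (Finset.univ.val.map c).sum = ∑ j, c j := rfl
    rw [hl, Fin.sum_univ_four] at this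
    simpa using this
  rcases hmem 0 with e0 | e0 <;> rcases hmem 1 with e1 | e1 <;>
    rcases hmem 2 with e2 | e2 <;> rcases hmem 3 with e3 | e3 <;>
    first
      | omega
      | (exact ⟨0, e0, by intro j' hj'; fin_cases j' <;> simp_all⟩)
      | (exact ⟨1, e1, by intro j' hj'; fin_cases j' <;> simp_all⟩)
      | (exact ⟨2, e2, by intro j' hj'; fin_cases j' <;> simp_all⟩)
      | (exact ⟨3, e3, by intro j' hj'; fin_cases j' <;> simp_all⟩)

/-- Case (4,2,2,2) in every direction: some selection of `S` lies on no 4-element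
plane, and is consequently disjoint from at least 6 other selections of `S`. -/
theorem case_422242224222 (S : Finset (Fin 3 → Fin 4)) (hS : S.card = 10)
    (a : (Fin 3 → Fin 4) → ℝ) (hpos : ∀ s ∈ S, 0 < a s)
    (hplane : ∀ (i : Fin 3) (j : Fin 4),
      ∑ s ∈ S.filter (fun s => s i = j), a s = 1 / 4)
    (hcounts : ∀ i : Fin 3,
      (Finset.univ.val.map (fun j : Fin 4 => (S.filter (fun s => s i = j)).card))
        = ({4, 2, 2, 2} : Multiset ℕ)) :
    ∃ v ∈ S,
      (∀ i : Fin 3, (S.filter (fun s => s i = v i)).card ≠ 4) ∧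
      6 ≤ (S.filter (fun s => s ≠ v ∧ ∀ i, s i ≠ v i)).card := by
  have hkey : ∀ i : Fin 3, ∃ j, (S.filter (fun s => s i = j)).card = 4 ∧
      ∀ j', j' ≠ j → (S.filter (fun s => s i = j')).card = 2 :=
    fun i => key4_aux _ (hcounts i)
  choose J hJ4 hJ2 using hkey
  have htot : ∑ s ∈ S, a s = 1 := by
    rw [← Finset.sum_fiberwise S (fun s => s 0) a]
    simp [hplane]
  have hnonneg : ∀ s ∈ S, 0 ≤ a s := fun s hs => (hpos s hs).le
  -- existence of a good v
  have hv : ∃ v ∈ S, ∀ i, (S.filter (fun s => s i = v i)).card ≠ 4 := by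
    by_contra hcon
    push_neg at hcon
    have hsub : S ⊆ S.filter (fun s => s 0 = J 0) ∪ S.filter (fun s => s 1 = J 1)
        ∪ S.filter (fun s => s 2 = J 2) := by
      intro s hs
      obtain ⟨i, hi⟩ := hcon s hs
      have hsi : s i = J i := by
        by_contra hne
        rw [hJ2 i _ hne] at hi
        norm_num at hi
      fin_cases i
      · exact Finset.mem_union_left _ (Finset.mem_union_left _
          (Finset.mem_filter.mpr ⟨hs, hsi⟩))
      · exact Finset.mem_union_left _ (Finset.mem_union_right _
          (Finset.mem_filter.mpr ⟨hs, hsi⟩))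
      · exact Finset.mem_union_right _ (Finset.mem_filter.mpr ⟨hs, hsi⟩)
    have hsself : ∀ (X : Finset (Fin 3 → Fin 4)), X ⊆ S → 0 ≤ ∑ s ∈ X, a s :=
      fun X hX => Finset.sum_nonneg (fun s hs => hnonneg s (hX hs))
    have hUsub : S.filter (fun s => s 0 = J 0) ∪ S.filter (fun s => s 1 = J 1)
        ∪ S.filter (fun s => s 2 = J 2) ⊆ S := by
      intro s hs
      simp only [Finset.mem_union, Finset.mem_filter] at hs
      tauto
    have h1 : ∑ s ∈ (S.filter (fun s => s 0 = J 0) ∪ S.filter (fun s => s 1 = J 1)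
        ∪ S.filter (fun s => s 2 = J 2)), a s
        ≤ ∑ s ∈ (S.filter (fun s => s 0 = J 0) ∪ S.filter (fun s => s 1 = J 1)), a s
          + ∑ s ∈ S.filter (fun s => s 2 = J 2), a s := by
      have heq := Finset.sum_union_inter
        (s₁ := S.filter (fun s => s 0 = J 0) ∪ S.filter (fun s => s 1 = J 1))
        (s₂ := S.filter (fun s => s 2 = J 2)) (f := a)
      have hio : 0 ≤ ∑ s ∈ (S.filter (fun s => s 0 = J 0) ∪ S.filter (fun s => s 1 = J 1))
          ∩ S.filter (fun s => s 2 = J 2), a s := by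
        apply hsself
        intro s hs
        exact hUsub (Finset.mem_union_left _ (Finset.mem_of_mem_inter_left hs))
      linarith
    have h2 : ∑ s ∈ (S.filter (fun s => s 0 = J 0) ∪ S.filter (fun s => s 1 = J 1)), a s
        ≤ ∑ s ∈ S.filter (fun s => s 0 = J 0), a s
          + ∑ s ∈ S.filter (fun s => s 1 = J 1), a s := by
      have heq := Finset.sum_union_inter
        (s₁ := S.filter (fun s => s 0 = J 0))
        (s₂ := S.filter (fun s => s 1 = J 1)) (f := a)
      have hio : 0 ≤ ∑ s ∈ S.filter (fun s => s 0 = J 0) ∩ S.filter (fun s => s 1 = J 1), a s := by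
        apply hsself
        intro s hs
        exact Finset.filter_subset _ _ (Finset.mem_of_mem_inter_left hs)
      linarith
    have h3 : ∑ s ∈ S, a s ≤ ∑ s ∈ (S.filter (fun s => s 0 = J 0)
        ∪ S.filter (fun s => s 1 = J 1) ∪ S.filter (fun s => s 2 = J 2)), a s :=
      Finset.sum_le_sum_of_subset_of_nonneg hsub (fun s hs _ => hnonneg s (hUsub hs))
    have e0 : ∑ s ∈ S.filter (fun s => s 0 = J 0), a s = 1 / 4 := hplane 0 (J 0)
    have e1 : ∑ s ∈ S.filter (fun s => s 1 = J 1), a s = 1 / 4 := hplane 1 (J 1)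
    have e2 : ∑ s ∈ S.filter (fun s => s 2 = J 2), a s = 1 / 4 := hplane 2 (J 2)
    rw [htot] at h3
    linarith
  obtain ⟨v, hvS, hv4⟩ := hv
  refine ⟨v, hvS, hv4, ?_⟩
  have hv2 : ∀ i, (S.filter (fun s => s i = v i)).card = 2 := by
    intro i
    have h : v i ≠ J i := by
      intro h
      apply hv4 i
      rw [h]
      exact hJ4 i
    exact hJ2 i _ h
  have hcard : (S.filter (fun s => s ≠ v ∧ ∀ i, s i ≠ v i)).card
      + (S.filter (fun s => ¬(s ≠ v ∧ ∀ i, s i ≠ v i))).card = S.card :=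
    Finset.card_filter_add_card_filter_not _
  have hBsub : S.filter (fun s => ¬(s ≠ v ∧ ∀ i, s i ≠ v i))
      ⊆ insert v (((S.filter (fun s => s 0 = v 0)).erase v ∪
      (S.filter (fun s => s 1 = v 1)).erase v) ∪
      (S.filter (fun s => s 2 = v 2)).erase v) := by
    intro s hs
    simp only [Finset.mem_filter] at hs
    obtain ⟨hsS, hcond⟩ := hs
    push_neg at hcond
    rcases eq_or_ne s v with h | h
    · rw [h]; exact Finset.mem_insert_self v _
    · obtain ⟨i, hi⟩ := hcond h
      apply Finset.mem_insert_of_mem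
      fin_cases i
      · exact Finset.mem_union_left _ (Finset.mem_union_left _
          (Finset.mem_erase.mpr ⟨h, Finset.mem_filter.mpr ⟨hsS, hi⟩⟩))
      · exact Finset.mem_union_left _ (Finset.mem_union_right _
          (Finset.mem_erase.mpr ⟨h, Finset.mem_filter.mpr ⟨hsS, hi⟩⟩))
      · exact Finset.mem_union_right _
          (Finset.mem_erase.mpr ⟨h, Finset.mem_filter.mpr ⟨hsS, hi⟩⟩)
  have hBcard : (S.filter (fun s => ¬(s ≠ v ∧ ∀ i, s i ≠ v i))).card ≤ 4 := by
    have hvmem : ∀ i : Fin 3, v ∈ S.filter (fun s => s i = v i) := by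
      intro i; simp [Finset.mem_filter, hvS]
    have he : ∀ i : Fin 3, ((S.filter (fun s => s i = v i)).erase v).card = 1 := by
      intro i
      rw [Finset.card_erase_of_mem (hvmem i), hv2 i]
    have hb1 := Finset.card_le_card hBsub
    have hb2 := Finset.card_insert_le v (((S.filter (fun s => s 0 = v 0)).erase v ∪
      (S.filter (fun s => s 1 = v 1)).erase v) ∪
      (S.filter (fun s => s 2 = v 2)).erase v)
    have u1 := Finset.card_union_le (((S.filter (fun s : Fin 3 → Fin 4 => s 0 = v 0)).erase v ∪
      (S.filter (fun s => s 1 = v 1)).erase v)) ((S.filter (fun s => s 2 = v 2)).erase v)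
    have u2 := Finset.card_union_le ((S.filter (fun s : Fin 3 → Fin 4 => s 0 = v 0)).erase v)
      ((S.filter (fun s => s 1 = v 1)).erase v)
    have e0 := he 0
    have e1 := he 1
    have e2 := he 2
    linarith
  linarith
end

section
/- Let S be a set of 10 piece selections in Fin 3 → Fin 4 with positive weights such that each of the 12 axis planes has total weight exactly 1/4. If some axis plane contains exactly one selection of S, then the conflict graph on S (edges between disjoint selections) has a connected component of size at least 6. -/
/-! The plane through the lone selection `v` has weight `a v = 1/4`, so every other plane through
`v` already spends its whole weight on `v` and contains no further selection. Hence every other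
selection differs from `v` in all coordinates, `v` is adjacent to all of `S`, and the component
of `v` is all ten selections. -/

/-- The conflict graph on a set `S` of piece selections: two selections are adjacent
iff both lie in `S` and they are disjoint (differ in every coordinate). -/
def conflictGraph (S : Finset (Fin 3 → Fin 4)) : SimpleGraph (Fin 3 → Fin 4) where
  Adj s t := s ∈ S ∧ t ∈ S ∧ ∀ i, s i ≠ t i
  symm := by
    constructor
    intro s t ⟨hs, ht, h⟩
    exact ⟨ht, hs, fun i => (h i).symm⟩
  loopless := by
    constructor
    intro s ⟨_, _, h⟩
    exact h 0 rfl

theorem eq_of_apply_eq_of_plane_eq_singleton {ι κ : Type*} [DecidableEq κ] {S : Finset (ι → κ)}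
    {a : (ι → κ) → ℝ} {c : ℝ} (hpos : ∀ s ∈ S, 0 < a s)
    (hplane : ∀ i j, ∑ s ∈ S.filter (fun s => s i = j), a s = c)
    {v : ι → κ} {i : ι} {j : κ} (hv : S.filter (fun s => s i = j) = {v})
    {t : ι → κ} (ht : t ∈ S) (k : ι) (htk : t k = v k) : t = v := by
  have hvS : v ∈ S := (Finset.mem_filter.mp (hv ▸ Finset.mem_singleton_self v)).1
  have hav : a v = c := by rw [← hplane i j, hv, Finset.sum_singleton]
  by_contra hne
  have hlt := Finset.single_lt_sum (s := S.filter (fun s => s k = v k)) (f := a) hne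
    (Finset.mem_filter.mpr ⟨hvS, rfl⟩) (Finset.mem_filter.mpr ⟨ht, htk⟩) (hpos t ht)
    fun s hs _ => (hpos s (Finset.mem_filter.mp hs).1).le
  rw [hplane, hav] at hlt
  exact hlt.false

theorem conflictGraph_reachable_of_forall_apply_eq {S : Finset (Fin 3 → Fin 4)}
    {v : Fin 3 → Fin 4} (hvS : v ∈ S) (hv : ∀ t ∈ S, ∀ k, t k = v k → t = v)
    {t : Fin 3 → Fin 4} (ht : t ∈ S) : (conflictGraph S).Reachable v t := by
  obtain rfl | hne := eq_or_ne t v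
  · rfl
  · exact SimpleGraph.Adj.reachable ⟨hvS, ht, fun k hk => hne (hv t ht k hk.symm)⟩

/-- If some axis plane contains exactly one selection of `S`, then the conflict
graph on `S` has a connected component of size at least 6. -/
theorem component_of_single_vertex_plane (S : Finset (Fin 3 → Fin 4)) (hS : S.card = 10)
    (a : (Fin 3 → Fin 4) → ℝ) (hpos : ∀ s ∈ S, 0 < a s)
    (hplane : ∀ (i : Fin 3) (j : Fin 4),
      ∑ s ∈ S.filter (fun s => s i = j), a s = 1 / 4)
    (hsingle : ∃ (i : Fin 3) (j : Fin 4), (S.filter (fun s => s i = j)).card = 1) :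
    ∃ v ∈ S, 6 ≤ Set.ncard {t | t ∈ S ∧ (conflictGraph S).Reachable v t} := by
  obtain ⟨i, j, hcard⟩ := hsingle
  obtain ⟨v, hv⟩ := Finset.card_eq_one.mp hcard
  have hvS : v ∈ S := (Finset.mem_filter.mp (hv ▸ Finset.mem_singleton_self v)).1
  have hcomponent : {t | t ∈ S ∧ (conflictGraph S).Reachable v t} = (S : Set (Fin 3 → Fin 4)) :=
    Set.ext fun t => ⟨And.left, fun ht => ⟨ht, conflictGraph_reachable_of_forall_apply_eq hvS
      (fun _ hs k => eq_of_apply_eq_of_plane_eq_singleton hpos hplane hv hs k) ht⟩⟩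
  refine ⟨v, hvS, ?_⟩
  rw [hcomponent, Set.ncard_coe_finset, hS]
  norm_num
end

section
/- Let S be a set of 10 piece selections in Fin 3 → Fin 4 with positive weights such that every one of the 12 axis planes has total weight exactly 1/4. Then the graph on S with edges between pairwise disjoint selections has a connected component containing at least 6 vertices. -/
/-!
Summing the three planes through `s` counts `s` three times and every selection meeting `s` at
least once, so the selections disjoint from `s` weigh at least `1 - 3/4 + 2 a s`, and the
component of `s` weighs at least `1/4 + 3 a s`. A component with at most five members, evaluated
at its heaviest member `s₀`, also weighs at most `5 a s₀`, hence at least `5/8`. Ten selections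
would then split into at least two such components, of total weight at least `5/4 > 1`.
-/

open Finset

section Planes

variable {ι κ : Type*} [Fintype ι] [DecidableEq κ] {S : Finset (ι → κ)} {a : (ι → κ) → ℝ}
  {s : ι → κ}

theorem sum_planes_through_eq :
    ∑ i, ∑ t ∈ S with t i = s i, a t = ∑ t ∈ S, #{i | t i = s i} * a t := by
  rw [sum_comm' (t' := S) (s' := fun t => {i | t i = s i})] <;> simp [and_comm]

theorem sum_add_mul_le_sum_disjoint_add_sum_planes (hs : s ∈ S) (ha : ∀ t ∈ S, 0 ≤ a t) :
    ∑ t ∈ S, a t + (Fintype.card ι - 1) * a s ≤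
      ∑ t ∈ S with ∀ i, s i ≠ t i, a t + ∑ i, ∑ t ∈ S with t i = s i, a t := by
  have hself : ∑ t ∈ S, (if s = t then (Fintype.card ι - 1) * a t else 0) =
      (Fintype.card ι - 1) * a s := by
    rw [sum_ite_eq _ _ (fun t => (Fintype.card ι - 1) * a t), if_pos hs]
  rw [sum_planes_through_eq, sum_filter, ← hself, ← sum_add_distrib, ← sum_add_distrib]
  refine sum_le_sum fun t ht => ?_
  have hat := ha t ht
  by_cases hst : s = t
  · subst hst
    have hcard : #{i | s i = s i} = Fintype.card ι := by simp
    rw [if_pos rfl, hcard]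
    split_ifs <;> linarith
  · rw [if_neg hst, add_zero]
    split_ifs with hdisj
    · have := (#{i | t i = s i}).cast_nonneg (α := ℝ)
      nlinarith
    · obtain ⟨i, hi⟩ := not_forall_not.mp hdisj
      have : (1 : ℝ) ≤ #{i | t i = s i} := by
        exact_mod_cast card_pos.mpr ⟨i, by simp [hi]⟩
      nlinarith

end Planes

namespace SimpleGraph

variable {α : Type*} (G : SimpleGraph α) [DecidableRel G.Reachable] {S : Finset α} {a : α → ℝ}
  {s u v : α}

theorem add_sum_adj_le_sum_reachable [DecidableRel G.Adj] (hs : s ∈ S) (ha : ∀ t ∈ S, 0 ≤ a t) :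
    a s + ∑ t ∈ S with G.Adj s t, a t ≤ ∑ t ∈ S with G.Reachable s t, a t := by
  classical
  rw [← sum_insert (by simp)]
  refine sum_le_sum_of_subset_of_nonneg ?_ fun t ht _ => ha t (mem_filter.mp ht).1
  refine insert_subset (mem_filter.mpr ⟨hs, Reachable.refl s⟩) fun t ht => ?_
  rw [mem_filter] at ht ⊢
  exact ⟨ht.1, ht.2.reachable⟩

theorem sum_reachable_add_sum_reachable_le (huv : ¬G.Reachable v u) (ha : ∀ t ∈ S, 0 ≤ a t) :
    ∑ t ∈ S with G.Reachable v t, a t + ∑ t ∈ S with G.Reachable u t, a t ≤ ∑ t ∈ S, a t := by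
  classical
  rw [← sum_union (disjoint_filter.mpr fun t _ hvt hut => huv (hvt.trans hut.symm))]
  exact sum_le_sum_of_subset_of_nonneg (union_subset (filter_subset _ _) (filter_subset _ _))
    fun t ht _ => ha t ht

theorem mul_le_sub_mul_sum_reachable {c k : ℝ} {n : ℕ} (hk : 0 ≤ k) (ha : ∀ t ∈ S, 0 ≤ a t)
    (hlb : ∀ s ∈ S, c + k * a s ≤ ∑ t ∈ S with G.Reachable s t, a t) (hv : v ∈ S)
    (hcard : #{t ∈ S | G.Reachable v t} ≤ n) :
    n * c ≤ (n - k) * ∑ t ∈ S with G.Reachable v t, a t := by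
  obtain ⟨s₀, hs₀, hmax⟩ := exists_max_image {t ∈ S | G.Reachable v t} a
    ⟨v, mem_filter.mpr ⟨hv, Reachable.refl v⟩⟩
  obtain ⟨hs₀S, hvs₀⟩ := mem_filter.mp hs₀
  have hcomp : {t ∈ S | G.Reachable s₀ t} = {t ∈ S | G.Reachable v t} :=
    filter_congr fun t _ => ⟨hvs₀.trans, hvs₀.symm.trans⟩
  have hlow := hlb s₀ hs₀S
  rw [hcomp] at hlow
  have hup : ∑ t ∈ S with G.Reachable v t, a t ≤ n * a s₀ :=
    calc ∑ t ∈ S with G.Reachable v t, a t ≤ #{t ∈ S | G.Reachable v t} * a s₀ := by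
          simpa using sum_le_card_nsmul _ _ _ hmax
      _ ≤ n * a s₀ := by have := ha s₀ hs₀S; gcongr
  nlinarith

end SimpleGraph

section ConflictGraph

variable {S : Finset (Fin 3 → Fin 4)} {a : (Fin 3 → Fin 4) → ℝ}

theorem conflictGraph_adj_iff {s t : Fin 3 → Fin 4} (hs : s ∈ S) (ht : t ∈ S) :
    (conflictGraph S).Adj s t ↔ ∀ i, s i ≠ t i := by
  simp [conflictGraph, hs, ht]

theorem sum_eq_one_of_sum_plane
    (hplane : ∀ (i : Fin 3) (j : Fin 4), ∑ s ∈ S with s i = j, a s = 1 / 4) :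
    ∑ s ∈ S, a s = 1 := by
  rw [← sum_fiberwise S (· 0) a]
  simp [hplane]

theorem le_sum_reachable_conflictGraph [DecidableRel (conflictGraph S).Reachable]
    (ha : ∀ t ∈ S, 0 ≤ a t)
    (hplane : ∀ (i : Fin 3) (j : Fin 4), ∑ s ∈ S with s i = j, a s = 1 / 4) {s : Fin 3 → Fin 4}
    (hs : s ∈ S) : 1 / 4 + 3 * a s ≤ ∑ t ∈ S with (conflictGraph S).Reachable s t, a t := by
  classical
  have hdisj := sum_add_mul_le_sum_disjoint_add_sum_planes hs ha
  simp only [hplane, sum_eq_one_of_sum_plane hplane, Fintype.card_fin] at hdisj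
  have hadj : ∑ t ∈ S with (conflictGraph S).Adj s t, a t = ∑ t ∈ S with ∀ i, s i ≠ t i, a t :=
    sum_congr (filter_congr fun t ht => conflictGraph_adj_iff hs ht) fun _ _ => rfl
  have hreach := (conflictGraph S).add_sum_adj_le_sum_reachable hs ha
  norm_num at hdisj
  linarith

end ConflictGraph

/-- If each of the 12 axis planes has total weight exactly `1/4`, then the conflict
graph on the 10 selections has a connected component with at least 6 vertices. -/
theorem conflict_graph_big_component (S : Finset (Fin 3 → Fin 4)) (hS : S.card = 10)
    (a : (Fin 3 → Fin 4) → ℝ) (hpos : ∀ s ∈ S, 0 < a s)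
    (hplane : ∀ (i : Fin 3) (j : Fin 4),
      ∑ s ∈ S.filter (fun s => s i = j), a s = 1 / 4) :
    ∃ v ∈ S, 6 ≤ Set.ncard {t | t ∈ S ∧ (conflictGraph S).Reachable v t} := by
  classical
  have ha : ∀ s ∈ S, 0 ≤ a s := fun s hs => (hpos s hs).le
  by_contra! hsmall
  have hcard : ∀ v ∈ S, #{t ∈ S | (conflictGraph S).Reachable v t} ≤ 5 := fun v hv => by
    have := hsmall v hv
    rw [← coe_filter, Set.ncard_coe_finset] at this
    convert Nat.le_of_lt_succ this
  have hheavy : ∀ v ∈ S, 5 / 8 ≤ ∑ t ∈ S with (conflictGraph S).Reachable v t, a t := by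
    intro v hv
    have := (conflictGraph S).mul_le_sub_mul_sum_reachable (by norm_num) ha
      (fun s hs => le_sum_reachable_conflictGraph ha hplane hs) hv (hcard v hv)
    norm_num at this
    linarith
  obtain ⟨v, hv⟩ := card_pos.mp (by omega : 0 < #S)
  obtain ⟨u, hu, hvu⟩ : ∃ u ∈ S, ¬(conflictGraph S).Reachable v u := by
    by_contra! hall
    have := hcard v hv
    rw [filter_true_of_mem hall] at this
    omega
  have := (conflictGraph S).sum_reachable_add_sum_reachable_le hvu ha
  linarith [hheavy v hv, hheavy u hu, sum_eq_one_of_sum_plane hplane]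
end

section
/- Define Alice's preference on piece selections s : Fin 3 → Fin 3 relative to a division (with piece sizes x_{ij} and threshold ε > 0) by: she only accepts selections all of whose pieces have size at least ε, ranks selections first by the maximal number of repeated values (3 equal values best, then exactly 2 equal, then all distinct), then by total size, then lexicographically; Bob ranks the categories in reverse order (all distinct best) with the same tie-breaking. Then for every division of 3 cakes into 3 pieces each in which every cake has at least one piece of size ≥ ε, Alice's most-preferred selection and Bob's most-preferred selection agree in at least one coordinate (they are not disjoint). -/
/-- Number of distinct values taken by a piece selection (its "category":
1 = three of a kind, 2 = exactly a pair, 3 = all different). -/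
def nvals (s : Fin 3 → Fin 3) : ℕ := (Finset.univ.image s).card

/-- Total size of the pieces chosen by `s` in the division `x`. -/
def totalSize (x : Fin 3 → Fin 3 → ℝ) (s : Fin 3 → Fin 3) : ℝ := ∑ i, x i (s i)

/-- A selection is ε-acceptable if each of its pieces has size at least ε. -/
def acceptable (x : Fin 3 → Fin 3 → ℝ) (ε : ℝ) (s : Fin 3 → Fin 3) : Prop :=
  ∀ i, ε ≤ x i (s i)

/-- Lexicographic order on selections. -/
def lexLt (s t : Fin 3 → Fin 3) : Prop :=
  ∃ i, (∀ j, j < i → s j = t j) ∧ s i < t i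

/-- Alice strictly prefers `s` to `t`: fewer distinct values first, then larger total
size, then lexicographically earlier. -/
def alicePref (x : Fin 3 → Fin 3 → ℝ) (s t : Fin 3 → Fin 3) : Prop :=
  nvals s < nvals t ∨
    (nvals s = nvals t ∧ (totalSize x t < totalSize x s ∨
      (totalSize x s = totalSize x t ∧ lexLt s t)))

/-- Bob strictly prefers `s` to `t`: more distinct values first, then larger total
size, then lexicographically earlier. -/
def bobPref (x : Fin 3 → Fin 3 → ℝ) (s t : Fin 3 → Fin 3) : Prop :=
  nvals t < nvals s ∨
    (nvals s = nvals t ∧ (totalSize x t < totalSize x s ∨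
      (totalSize x s = totalSize x t ∧ lexLt s t)))


instance (s t : Fin 3 → Fin 3) : Decidable (lexLt s t) := by
  unfold lexLt; infer_instance

lemma lexLt_asymm : ∀ s t : Fin 3 → Fin 3, lexLt s t → lexLt t s → False := by decide

lemma case12 : ∀ s t : Fin 3 → Fin 3, nvals s = 1 → nvals t = 2 →
    (∀ i, s i ≠ t i) → ∃ u, nvals u = 3 ∧ ∀ i, u i = s i ∨ u i = t i := by decide

lemma case23 : ∀ s t : Fin 3 → Fin 3, nvals s = 2 → nvals t = 3 →
    (∀ i, s i ≠ t i) → ∃ u, nvals u = 1 ∧ ∀ i, u i = s i ∨ u i = t i := by decide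

lemma case13 : ∀ s t : Fin 3 → Fin 3, nvals s = 1 → nvals t = 3 →
    (∀ i, s i ≠ t i) → False := by decide

lemma nvals_cases : ∀ s : Fin 3 → Fin 3, nvals s = 1 ∨ nvals s = 2 ∨ nvals s = 3 := by decide

/-- For any division of 3 cakes into 3 pieces each (with every cake having a piece of
size at least ε), Alice's most-preferred selection and Bob's most-preferred selection
agree in some coordinate: they are never disjoint. -/
theorem alice_bob_never_disjoint (x : Fin 3 → Fin 3 → ℝ) (ε : ℝ) (hε : 0 < ε)
    (hx0 : ∀ i j, 0 ≤ x i j) (hx1 : ∀ i, ∑ j, x i j = 1)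
    (hcake : ∀ i, ∃ j, ε ≤ x i j)
    (sA sB : Fin 3 → Fin 3)
    (hAacc : acceptable x ε sA)
    (hAbest : ∀ t, acceptable x ε t → t ≠ sA → alicePref x sA t)
    (hBacc : acceptable x ε sB)
    (hBbest : ∀ t, acceptable x ε t → t ≠ sB → bobPref x sB t) :
    ∃ i, sA i = sB i := by

  by_contra hcon
  push_neg at hcon
  have hne : sB ≠ sA := by
    intro he; exact hcon 0 (by rw [he])
  have hAB := hAbest sB hBacc hne
  have hBA := hBbest sA hAacc (fun he => hne he.symm)
  rcases hAB with hlt | ⟨heq, htie⟩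
  · -- nvals sA < nvals sB
    have hacc : ∀ u : Fin 3 → Fin 3, (∀ i, u i = sA i ∨ u i = sB i) → acceptable x ε u := by
      intro u hu i
      rcases hu i with h | h
      · rw [h]; exact hAacc i
      · rw [h]; exact hBacc i
    rcases nvals_cases sA with h1 | h2 | h3
    · rcases nvals_cases sB with g1 | g2 | g3
      · omega
      · obtain ⟨u, hu3, hui⟩ := case12 sA sB h1 g2 hcon
        have huB : u ≠ sB := by intro he; rw [he] at hu3; omega
        have := hBbest u (hacc u hui) huB
        unfold bobPref at this; omega
      · exact absurd (case13 sA sB h1 g3 hcon) (fun h => h)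
    · rcases nvals_cases sB with g1 | g2 | g3
      · omega
      · omega
      · obtain ⟨u, hu1, hui⟩ := case23 sA sB h2 g3 hcon
        have huA : u ≠ sA := by intro he; rw [he] at hu1; omega
        have := hAbest u (hacc u hui) huA
        unfold alicePref at this; omega
    · rcases nvals_cases sB with g1 | g2 | g3 <;> omega
  · -- nvals equal: tie-break contradiction
    rcases hBA with hlt' | ⟨heq', htie'⟩
    · omega
    · rcases htie with hT | ⟨hTe, hL⟩ <;> rcases htie' with hT' | ⟨hTe', hL'⟩
      · linarith
      · linarith
      · linarith
      · exact lexLt_asymm sA sB hL hL'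
end

section
/- For the square [0,1]^2 of divisions of two cakes into two pieces each, there exist closed covers {A_{aa}, A_{ab}, A_{ba}, A_{bb}} and {B_{aa}, B_{ab}, B_{ba}, B_{bb}} of the square, each satisfying the boundary conditions of a valid preference cover (selections with an empty piece are never preferred), such that no point of the square lies simultaneously in one player's set for a selection and the other player's set for the complementary (disjoint) selection. -/
/-- The unit square of divisions of two cakes into two pieces each:
`(x, y)` records the size of piece `a` of each cake. -/
def divSquare : Set (ℝ × ℝ) := Set.Icc (0 : ℝ) 1 ×ˢ Set.Icc (0 : ℝ) 1

/-- The complementary (disjoint) piece selection. -/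
def flipSel (s : Fin 2 × Fin 2) : Fin 2 × Fin 2 :=
  ((if s.1 = 0 then 1 else 0), (if s.2 = 0 then 1 else 0))

/-- A valid preference cover for the square of divisions: four closed sets, indexed
by piece selections (first coordinate: piece of cake 1, second: piece of cake 2;
piece `0` = `a`, piece `1` = `b`), covering the square, such that a selection using
an empty piece is never preferred. -/
def IsPrefCover (A : Fin 2 × Fin 2 → Set (ℝ × ℝ)) : Prop :=
  (∀ s, IsClosed (A s)) ∧
  divSquare ⊆ ⋃ s, A s ∧
  (∀ s, ∀ p ∈ A s ∩ divSquare,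
    (p.1 = 0 → s.1 ≠ 0) ∧ (p.1 = 1 → s.1 ≠ 1) ∧
    (p.2 = 0 → s.2 ≠ 0) ∧ (p.2 = 1 → s.2 ≠ 1))

/-- Player A's cover: vertical split at `x = 1/2`; the left column is split
at `y = 3/4`, the right column at `y = 1/4`. -/
def Acov (s : Fin 2 × Fin 2) : Set (ℝ × ℝ) :=
  (if s.1 = 0 then Set.Icc (1/2 : ℝ) 1 else Set.Icc (0 : ℝ) (1/2)) ×ˢ
  (if s.2 = 0 then (if s.1 = 0 then Set.Icc (1/4 : ℝ) 1 else Set.Icc (3/4 : ℝ) 1)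
   else (if s.1 = 0 then Set.Icc (0 : ℝ) (1/4) else Set.Icc (0 : ℝ) (3/4)))

/-- Player B's cover: horizontal split at `y = 1/2`; the top row is split
at `x = 3/4`, the bottom row at `x = 1/4`. -/
def Bcov (s : Fin 2 × Fin 2) : Set (ℝ × ℝ) :=
  (if s.2 = 0 then (if s.1 = 0 then Set.Icc (3/4 : ℝ) 1 else Set.Icc (0 : ℝ) (3/4))
   else (if s.1 = 0 then Set.Icc (1/4 : ℝ) 1 else Set.Icc (0 : ℝ) (1/4))) ×ˢ
  (if s.2 = 0 then Set.Icc (1/2 : ℝ) 1 else Set.Icc (0 : ℝ) (1/2))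

lemma A00 : Acov (0,0) = Set.Icc (1/2 : ℝ) 1 ×ˢ Set.Icc (1/4 : ℝ) 1 := rfl
lemma A01 : Acov (0,1) = Set.Icc (1/2 : ℝ) 1 ×ˢ Set.Icc (0 : ℝ) (1/4) := rfl
lemma A10 : Acov (1,0) = Set.Icc (0 : ℝ) (1/2) ×ˢ Set.Icc (3/4 : ℝ) 1 := rfl
lemma A11 : Acov (1,1) = Set.Icc (0 : ℝ) (1/2) ×ˢ Set.Icc (0 : ℝ) (3/4) := rfl
lemma B00 : Bcov (0,0) = Set.Icc (3/4 : ℝ) 1 ×ˢ Set.Icc (1/2 : ℝ) 1 := rfl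
lemma B01 : Bcov (0,1) = Set.Icc (1/4 : ℝ) 1 ×ˢ Set.Icc (0 : ℝ) (1/2) := rfl
lemma B10 : Bcov (1,0) = Set.Icc (0 : ℝ) (3/4) ×ˢ Set.Icc (1/2 : ℝ) 1 := rfl
lemma B11 : Bcov (1,1) = Set.Icc (0 : ℝ) (1/4) ×ˢ Set.Icc (0 : ℝ) (1/2) := rfl

lemma fin2 (k : Fin 2) : k = 0 ∨ k = 1 := by omega

lemma memProdIcc {x y a b c d : ℝ} (h1 : a ≤ x) (h2 : x ≤ b) (h3 : c ≤ y) (h4 : y ≤ d) :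
    (x, y) ∈ Set.Icc a b ×ˢ Set.Icc c d := ⟨⟨h1, h2⟩, ⟨h3, h4⟩⟩

lemma emptyInter {S T U : Set (ℝ × ℝ)}
    (h : ∀ x y : ℝ, (x, y) ∈ S → (x, y) ∈ T → (x, y) ∈ U → False) :
    S ∩ T ∩ U = ∅ := by
  apply Set.eq_empty_iff_forall_notMem.2
  rintro ⟨x, y⟩ ⟨⟨hS, hT⟩, hU⟩
  exact h x y hS hT hU

/-- There exist valid preference covers for two players on the square of divisions
of two cakes into two pieces such that at no division do the players prefer
complementary (disjoint) piece selections. -/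
theorem two_cakes_two_pieces_counterexample :
    ∃ A B : Fin 2 × Fin 2 → Set (ℝ × ℝ),
      IsPrefCover A ∧ IsPrefCover B ∧
      ∀ s : Fin 2 × Fin 2, divSquare ∩ A s ∩ B (flipSel s) = ∅ := by
  refine ⟨Acov, Bcov, ⟨?_, ?_, ?_⟩, ⟨?_, ?_, ?_⟩, ?_⟩
  · intro s
    unfold Acov
    split <;> split <;> exact isClosed_Icc.prod isClosed_Icc
  · rintro ⟨x, y⟩ hp
    obtain ⟨⟨hx0, hx1⟩, hy0, hy1⟩ := hp
    simp only [Set.mem_iUnion]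
    rcases le_or_gt x (1/2) with hx | hx
    · rcases le_or_gt y (3/4) with hy | hy
      · exact ⟨(1,1), A11 ▸ memProdIcc hx0 hx hy0 hy⟩
      · exact ⟨(1,0), A10 ▸ memProdIcc hx0 hx hy.le hy1⟩
    · rcases le_or_gt y (1/4) with hy | hy
      · exact ⟨(0,1), A01 ▸ memProdIcc hx.le hx1 hy0 hy⟩
      · exact ⟨(0,0), A00 ▸ memProdIcc hx.le hx1 hy.le hy1⟩
  · rintro ⟨i, j⟩ ⟨x, y⟩ ⟨h1, h2⟩
    rcases fin2 i with rfl | rfl <;> rcases fin2 j with rfl | rfl <;>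
      [rw [A00] at h1; rw [A01] at h1; rw [A10] at h1; rw [A11] at h1] <;>
      obtain ⟨⟨ha, hb⟩, hc, hd⟩ := h1 <;>
      refine ⟨fun h => ?_, fun h => ?_, fun h => ?_, fun h => ?_⟩ <;>
      first
        | decide
        | (exfalso; linarith)
  · intro s
    unfold Bcov
    split <;> split <;> exact isClosed_Icc.prod isClosed_Icc
  · rintro ⟨x, y⟩ hp
    obtain ⟨⟨hx0, hx1⟩, hy0, hy1⟩ := hp
    simp only [Set.mem_iUnion]
    rcases le_or_gt y (1/2) with hy | hy
    · rcases le_or_gt x (1/4) with hx | hx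
      · exact ⟨(1,1), B11 ▸ memProdIcc hx0 hx hy0 hy⟩
      · exact ⟨(0,1), B01 ▸ memProdIcc hx.le hx1 hy0 hy⟩
    · rcases le_or_gt x (3/4) with hx | hx
      · exact ⟨(1,0), B10 ▸ memProdIcc hx0 hx hy.le hy1⟩
      · exact ⟨(0,0), B00 ▸ memProdIcc hx.le hx1 hy.le hy1⟩
  · rintro ⟨i, j⟩ ⟨x, y⟩ ⟨h1, h2⟩
    rcases fin2 i with rfl | rfl <;> rcases fin2 j with rfl | rfl <;>
      [rw [B00] at h1; rw [B01] at h1; rw [B10] at h1; rw [B11] at h1] <;>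
      obtain ⟨⟨ha, hb⟩, hc, hd⟩ := h1 <;>
      refine ⟨fun h => ?_, fun h => ?_, fun h => ?_, fun h => ?_⟩ <;>
      first
        | decide
        | (exfalso; linarith)
  · rintro ⟨i, j⟩
    rcases fin2 i with rfl | rfl <;> rcases fin2 j with rfl | rfl
    · rw [show flipSel (0,0) = (1,1) from rfl, A00, B11]
      refine emptyInter fun x y _ hA hB => ?_
      obtain ⟨⟨ha, -⟩, -⟩ := hA; obtain ⟨⟨-, hb⟩, -⟩ := hB
      linarith
    · rw [show flipSel (0,1) = (1,0) from rfl, A01, B10]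
      refine emptyInter fun x y _ hA hB => ?_
      obtain ⟨-, -, ha⟩ := hA; obtain ⟨-, hb, -⟩ := hB
      linarith
    · rw [show flipSel (1,0) = (0,1) from rfl, A10, B01]
      refine emptyInter fun x y _ hA hB => ?_
      obtain ⟨-, ha, -⟩ := hA; obtain ⟨-, -, hb⟩ := hB
      linarith
    · rw [show flipSel (1,1) = (0,0) from rfl, A11, B00]
      refine emptyInter fun x y _ hA hB => ?_
      obtain ⟨⟨-, ha⟩, -⟩ := hA; obtain ⟨⟨hb, -⟩, -⟩ := hB
      linarith
end
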